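/- arXiv:2211.01347 — 2 statements merged into one kernel-verified Lean document; each statement's English description precedes it below -/
import Mathlib

section
/- Let x be a point in the completion X̂ of a length space X with x ∉ X. Then for every a > 0 there exists a curve γ : [0,a) → X of finite length such that γ(t) → x in X̂ as t → a. -/
open Set Filter

/-- A metric space is a length space if the distance between any two points is the
infimum of lengths (total variations) of continuous curves joining them. -/
def IsLengthSpace (X : Type*) [MetricSpace X] : Prop :=
  ∀ x y : X, ∀ ε > 0, ∃ γ : ℝ → X, ContinuousOn γ (Set.Icc 0 1) ∧ γ 0 = x ∧ γ 1 = y ∧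
    eVariationOn γ (Set.Icc 0 1) ≤ ENNReal.ofReal (dist x y + ε)

/-!
Pick `uₙ ∈ X` converging to `x` in the completion with `∑ dist uₙ uₙ₊₁ < ∞`, join `uₙ` to `uₙ₊₁`
by a curve of length at most `dist uₙ uₙ₊₁ + 2⁻ⁿ`, and run through these curves on the
successive intervals `[n, n + 1]`. The result is a continuous curve on `[0, ∞)` of finite length
tending to `x`, and `t ↦ t / (a - t)` reparametrizes it over `[0, a)`.
-/

open scoped Topology

section Concat

variable {E : Type*} {Γ : ℕ → ℝ → E}

noncomputable def concatCurves (Γ : ℕ → ℝ → E) (t : ℝ) : E :=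
  Γ ⌊t⌋₊ (t - ⌊t⌋₊)

lemma concatCurves_eq_of_mem_Ico {n : ℕ} {t : ℝ} (ht : t ∈ Ico (n : ℝ) (n + 1)) :
    concatCurves Γ t = Γ n (t - n) := by
  rw [concatCurves, (Nat.floor_eq_iff ((Nat.cast_nonneg n).trans ht.1)).2 ht]

lemma eqOn_concatCurves_Icc (hΓ : ∀ n, Γ n 1 = Γ (n + 1) 0) (n : ℕ) :
    EqOn (concatCurves Γ) (Γ n ∘ fun t => t - n) (Icc (n : ℝ) (n + 1)) := by
  intro t ht
  rcases ht.2.lt_or_eq with hlt | rfl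
  · exact concatCurves_eq_of_mem_Ico ⟨ht.1, hlt⟩
  · have hfloor : ⌊(n : ℝ) + 1⌋₊ = n + 1 := mod_cast Nat.floor_natCast (n + 1)
    simp [concatCurves, hfloor, hΓ]

lemma mapsTo_sub_natCast_Icc (n : ℕ) :
    MapsTo (fun t : ℝ => t - n) (Icc (n : ℝ) (n + 1)) (Icc 0 1) :=
  fun t ht => ⟨by linarith [ht.1], by linarith [ht.2]⟩

variable [PseudoEMetricSpace E]

lemma edist_concatCurves_le {t : ℝ} (ht : 0 ≤ t) :
    edist (concatCurves Γ t) (Γ ⌊t⌋₊ 0) ≤ eVariationOn (Γ ⌊t⌋₊) (Icc 0 1) :=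
  eVariationOn.edist_le _
    ⟨sub_nonneg.2 (Nat.floor_le ht), by linarith [Nat.lt_floor_add_one t]⟩ ⟨le_rfl, zero_le_one⟩

lemma continuousOn_concatCurves_Icc_zero (hc : ∀ n, ContinuousOn (Γ n) (Icc 0 1))
    (hΓ : ∀ n, Γ n 1 = Γ (n + 1) 0) (N : ℕ) :
    ContinuousOn (concatCurves Γ) (Icc 0 N) := by
  induction N with
  | zero => simp
  | succ N ih =>
    have hpiece : ContinuousOn (concatCurves Γ) (Icc (N : ℝ) (N + 1)) :=
      ((hc N).comp (continuousOn_id.sub continuousOn_const) (mapsTo_sub_natCast_Icc N)).congr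
        (eqOn_concatCurves_Icc hΓ N)
    have := ih.union_of_isClosed hpiece isClosed_Icc isClosed_Icc
    rwa [Icc_union_Icc_eq_Icc (Nat.cast_nonneg N) (by linarith), ← Nat.cast_succ] at this

lemma continuousOn_concatCurves (hc : ∀ n, ContinuousOn (Γ n) (Icc 0 1))
    (hΓ : ∀ n, Γ n 1 = Γ (n + 1) 0) : ContinuousOn (concatCurves Γ) (Ici 0) := by
  refine continuousOn_of_locally_continuousOn fun t _ => ⟨Iio (⌊t⌋₊ + 1 : ℕ), isOpen_Iio, ?_, ?_⟩
  · exact mod_cast Nat.lt_floor_add_one t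
  · exact (continuousOn_concatCurves_Icc_zero hc hΓ _).mono fun s hs => ⟨hs.1, hs.2.le⟩

lemma eVariationOn_concatCurves_Icc (hΓ : ∀ n, Γ n 1 = Γ (n + 1) 0) (n : ℕ) :
    eVariationOn (concatCurves Γ) (Icc (n : ℝ) (n + 1)) = eVariationOn (Γ n) (Icc 0 1) := by
  rw [eVariationOn.eq_of_eqOn (eqOn_concatCurves_Icc hΓ n),
    eVariationOn.comp_eq_of_monotoneOn _ _ fun _ _ _ _ h => sub_le_sub_right h _,
    image_sub_const_Icc, sub_self, add_sub_cancel_left]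

lemma eVariationOn_concatCurves_Icc_zero (hΓ : ∀ n, Γ n 1 = Γ (n + 1) 0) (N : ℕ) :
    eVariationOn (concatCurves Γ) (Icc 0 N) =
      ∑ n ∈ Finset.range N, eVariationOn (Γ n) (Icc 0 1) := by
  have := eVariationOn.sum' (concatCurves Γ) Nat.mono_cast (n := N)
  simpa only [Nat.cast_succ, Nat.cast_zero, eVariationOn_concatCurves_Icc hΓ] using this.symm

lemma eVariationOn_concatCurves_Ici (hΓ : ∀ n, Γ n 1 = Γ (n + 1) 0) :
    eVariationOn (concatCurves Γ) (Ici 0) = ∑' n, eVariationOn (Γ n) (Icc 0 1) := by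
  refine le_antisymm ?_ ?_
  · rw [eVariationOn.eq_biSup_inter_Icc]
    refine iSup₂_le fun p hp => ?_
    calc eVariationOn (concatCurves Γ) (Ici 0 ∩ Icc p.1 p.2)
        ≤ eVariationOn (concatCurves Γ) (Icc 0 ⌈p.2⌉₊) :=
          eVariationOn.mono _ fun s hs => ⟨hs.1, hs.2.2.trans (Nat.le_ceil _)⟩
      _ ≤ ∑' n, eVariationOn (Γ n) (Icc 0 1) := by
          rw [eVariationOn_concatCurves_Icc_zero hΓ]
          exact ENNReal.sum_le_tsum _
  · rw [ENNReal.tsum_eq_iSup_nat]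
    refine iSup_le fun N => ?_
    rw [← eVariationOn_concatCurves_Icc_zero hΓ]
    exact eVariationOn.mono _ Icc_subset_Ici_self

lemma tendsto_concatCurves_atTop {F : Type*} [PseudoEMetricSpace F] {f : E → F} (hf : Isometry f)
    {y : F} (hstart : Tendsto (fun n => f (Γ n 0)) atTop (𝓝 y))
    (hvar : ∑' n, eVariationOn (Γ n) (Icc 0 1) ≠ ⊤) :
    Tendsto (f ∘ concatCurves Γ) atTop (𝓝 y) := by
  rw [tendsto_iff_edist_tendsto_0] at hstart ⊢
  have hsum := ((ENNReal.tendsto_atTop_zero_of_tsum_ne_top hvar).add hstart).comp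
    (tendsto_nat_floor_atTop (α := ℝ))
  rw [add_zero] at hsum
  refine tendsto_of_tendsto_of_tendsto_of_le_of_le' tendsto_const_nhds hsum
    (Eventually.of_forall fun _ => zero_le) ?_
  filter_upwards [eventually_ge_atTop 0] with t ht
  calc edist (f (concatCurves Γ t)) y
      ≤ edist (f (concatCurves Γ t)) (f (Γ ⌊t⌋₊ 0)) + edist (f (Γ ⌊t⌋₊ 0)) y :=
        edist_triangle _ _ _
    _ ≤ _ := by
      rw [hf.edist_eq]
      exact add_le_add_left (edist_concatCurves_le ht) _

end Concat

section Reparam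

variable {a : ℝ}

lemma monotoneOn_div_sub_self (ha : 0 ≤ a) : MonotoneOn (fun t => t / (a - t)) (Iio a) := by
  intro s hs t ht hst
  dsimp only
  rw [div_le_div_iff₀ (sub_pos.2 hs) (sub_pos.2 ht)]
  nlinarith

lemma continuousOn_div_sub_self : ContinuousOn (fun t => t / (a - t)) (Iio a) :=
  continuousOn_id.div (continuousOn_const.sub continuousOn_id) fun _ ht => (sub_pos.2 ht).ne'

lemma image_div_sub_self_Ico (ha : 0 < a) : (fun t => t / (a - t)) '' Ico 0 a = Ici 0 := by
  refine (image_subset_iff.2 fun t ht => div_nonneg ht.1 (sub_pos.2 ht.2).le).antisymm ?_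
  intro y (hy : 0 ≤ y)
  have hy1 : 0 < 1 + y := by linarith
  refine ⟨a * y / (1 + y), ⟨by positivity, ?_⟩, ?_⟩
  · rw [div_lt_iff₀ hy1]; nlinarith
  · dsimp only
    rw [show a - a * y / (1 + y) = a / (1 + y) by field_simp; ring]
    field_simp

lemma tendsto_div_sub_self_nhdsLT (ha : 0 < a) :
    Tendsto (fun t => t / (a - t)) (𝓝[<] a) atTop := by
  have hsub : Tendsto (fun t => a - t) (𝓝[<] a) (𝓝[>] 0) := by
    refine tendsto_nhdsWithin_of_tendsto_nhds_of_eventually_within _ ?_ ?_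
    · have := ((continuous_sub_left a).tendsto a).mono_left (nhdsWithin_le_nhds (s := Iio a))
      rwa [sub_self] at this
    · filter_upwards [self_mem_nhdsWithin] with t (ht : t < a) using sub_pos.2 ht
  simp only [div_eq_mul_inv]
  exact (tendsto_id.mono_left nhdsWithin_le_nhds).pos_mul_atTop ha
    (tendsto_inv_nhdsGT_zero.comp hsub)

end Reparam

lemma DenseRange.exists_seq_tendsto_summable_dist {X Y : Type*} [PseudoMetricSpace X]
    [PseudoMetricSpace Y] {f : X → Y} (hd : DenseRange f) (hf : Isometry f) (y : Y) :
    ∃ u : ℕ → X, Tendsto (f ∘ u) atTop (𝓝 y) ∧ Summable fun n => dist (u n) (u (n + 1)) := by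
  choose u hu using fun n : ℕ => Metric.denseRange_iff.1 hd y ((1 / 2 : ℝ) ^ n) (by positivity)
  refine ⟨u, ?_, ?_⟩
  · rw [tendsto_iff_dist_tendsto_zero]
    refine squeeze_zero (fun _ => dist_nonneg) (fun n => ?_)
      (tendsto_pow_atTop_nhds_zero_of_lt_one (r := (1 / 2 : ℝ)) (by norm_num) (by norm_num))
    exact (dist_comm (f (u n)) y).trans_le (hu n).le
  · refine .of_nonneg_of_le (fun _ => dist_nonneg) (fun n => ?_) (summable_geometric_two.mul_left 3)
    have hnext := hu (n + 1)
    rw [pow_succ] at hnext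
    calc dist (u n) (u (n + 1)) = dist (f (u n)) (f (u (n + 1))) := (hf.dist_eq _ _).symm
      _ ≤ dist y (f (u n)) + dist y (f (u (n + 1))) := dist_triangle_left _ _ _
      _ ≤ 3 * (1 / 2) ^ n := by linarith [hu n, pow_pos (one_half_pos (α := ℝ)) n]

lemma IsLengthSpace.exists_curves_of_summable {X : Type*} [MetricSpace X] (h : IsLengthSpace X)
    {u : ℕ → X} (hu : Summable fun n => dist (u n) (u (n + 1))) :
    ∃ Γ : ℕ → ℝ → X, (∀ n, ContinuousOn (Γ n) (Icc 0 1)) ∧ (∀ n, Γ n 0 = u n) ∧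
      (∀ n, Γ n 1 = u (n + 1)) ∧ ∑' n, eVariationOn (Γ n) (Icc 0 1) ≠ ⊤ := by
  choose Γ hc h0 h1 hvar using fun n => h (u n) (u (n + 1)) ((1 / 2) ^ n) (by positivity)
  refine ⟨Γ, hc, h0, h1, ne_top_of_le_ne_top ?_ (ENNReal.tsum_le_tsum hvar)⟩
  rw [← ENNReal.ofReal_tsum_of_nonneg (fun n => by positivity) (hu.add summable_geometric_two)]
  exact ENNReal.ofReal_ne_top

theorem stmt_4_general (X : Type*) [MetricSpace X] (h : IsLengthSpace X)
    (x : UniformSpace.Completion X) :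
    ∀ a > (0:ℝ), ∃ γ : ℝ → X, ContinuousOn γ (Set.Ico 0 a) ∧
      eVariationOn γ (Set.Ico 0 a) < ⊤ ∧
      Filter.Tendsto (fun t => (γ t : UniformSpace.Completion X))
        (nhdsWithin a (Set.Iio a)) (nhds x) := by
  intro a ha
  obtain ⟨u, hux, hu⟩ := UniformSpace.Completion.denseRange_coe.exists_seq_tendsto_summable_dist
    UniformSpace.Completion.coe_isometry x
  obtain ⟨Γ, hc, h0, h1, hvar⟩ := h.exists_curves_of_summable hu
  have hjoin : ∀ n, Γ n 1 = Γ (n + 1) 0 := fun n => (h1 n).trans (h0 (n + 1)).symm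
  have hlim := tendsto_concatCurves_atTop UniformSpace.Completion.coe_isometry
    (by simp only [h0]; exact hux) hvar
  set φ := fun t : ℝ => t / (a - t)
  have hφim : φ '' Ico 0 a = Ici 0 := image_div_sub_self_Ico ha
  refine ⟨concatCurves Γ ∘ φ, (continuousOn_concatCurves hc hjoin).comp
    (continuousOn_div_sub_self.mono Ico_subset_Iio_self) (hφim ▸ mapsTo_image φ _), ?_,
    hlim.comp (tendsto_div_sub_self_nhdsLT ha)⟩
  rw [eVariationOn.comp_eq_of_monotoneOn _ _
      ((monotoneOn_div_sub_self ha.le).mono Ico_subset_Iio_self), hφim,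
    eVariationOn_concatCurves_Ici hjoin]
  exact hvar.lt_top

/-- any point of the completion of a length space `X` not lying in `X`
is the limit, for every `a > 0`, of a finite-length curve `γ : [0,a) → X`. -/
theorem stmt_4 (X : Type*) [MetricSpace X] (h : IsLengthSpace X)
    (x : UniformSpace.Completion X)
    (hx : x ∉ Set.range ((↑) : X → UniformSpace.Completion X)) :
    ∀ a > (0:ℝ), ∃ γ : ℝ → X, ContinuousOn γ (Set.Ico 0 a) ∧
      eVariationOn γ (Set.Ico 0 a) < ⊤ ∧
      Filter.Tendsto (fun t => (γ t : UniformSpace.Completion X))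
        (nhdsWithin a (Set.Iio a)) (nhds x) :=
  stmt_4_general X h x
end

section
/- In the unit round sphere S², let pxy be a geodesic triangle with |px| = ε ∈ (0, π/2), ∠pxy = π/2, and |xy| = π − ε. Let pxy' be a mirror copy glued to pxy along the side px, forming a spherical quadrilateral Z. Then the distance in Z between y and y' is greater than π − 2ε. -/
open Real

/-- The intrinsic (angular) distance between two unit vectors of `ℝ³`, i.e. the
spherical distance on the unit round sphere `S²`. -/
noncomputable def sDist (a b : EuclideanSpace ℝ (Fin 3)) : ℝ :=
  Real.arccos (inner ℝ a b : ℝ)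

/-- The angle of the spherical triangle `abc` at the vertex `a`, defined via the
spherical law of cosines. -/
noncomputable def sAngle (a b c : EuclideanSpace ℝ (Fin 3)) : ℝ :=
  Real.arccos ((Real.cos (sDist b c) - Real.cos (sDist a b) * Real.cos (sDist a c)) /
    (Real.sin (sDist a b) * Real.sin (sDist a c)))

/-- The geodesic segment from `P` to `X` inside a region `T` of the unit sphere:
the points of `T` lying (spherically) between `P` and `X`. -/
def sSegment (T : Set (EuclideanSpace ℝ (Fin 3))) (P X : EuclideanSpace ℝ (Fin 3)) :
    Set (EuclideanSpace ℝ (Fin 3)) :=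
  {q ∈ T | sDist P q + sDist q X = sDist P X}

/-- A geodesic metric space: any two points are joined by an isometrically
parametrized geodesic. -/
def IsGeodesicSpace (Y : Type*) [MetricSpace Y] : Prop :=
  ∀ x y : Y, ∃ γ : ℝ → Y, γ 0 = x ∧ γ (dist x y) = y ∧
    ∀ s ∈ Set.Icc (0:ℝ) (dist x y), ∀ t ∈ Set.Icc (0:ℝ) (dist x y),
      dist (γ s) (γ t) = |s - t|

/-!
A geodesic from `ι Y` to `ι' Y` starts in one copy of the triangle and ends in the other, so,
both copies being closed, it meets their intersection, the glued side `PX`, at some `q`. Hence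
`dist (ι Y) (ι' Y) = |Yq| + |qY|`. As `q` lies on `PX`, `|Xq| ≤ |PX| = ε`, and the triangle
inequality gives `|qY| ≥ |XY| - |Xq| ≥ π - 2ε > 0`, so the distance is at least
`2(π - 2ε) > π - 2ε`.
-/

lemma sDist_comm (a b : EuclideanSpace ℝ (Fin 3)) : sDist a b = sDist b a := by
  rw [sDist, sDist, real_inner_comm]

lemma sDist_eq_angle {a b : EuclideanSpace ℝ (Fin 3)} (ha : ‖a‖ = 1) (hb : ‖b‖ = 1) :
    sDist a b = InnerProductGeometry.angle a b := by
  rw [sDist, InnerProductGeometry.angle, ha, hb, mul_one, div_one]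

lemma sDist_triangle {a b c : EuclideanSpace ℝ (Fin 3)}
    (ha : ‖a‖ = 1) (hb : ‖b‖ = 1) (hc : ‖c‖ = 1) :
    sDist a c ≤ sDist a b + sDist b c := by
  rw [sDist_eq_angle ha hc, sDist_eq_angle ha hb, sDist_eq_angle hb hc]
  exact InnerProductGeometry.angle_le_angle_add_angle a b c

lemma sDist_le_of_mem_sSegment {T : Set (EuclideanSpace ℝ (Fin 3))}
    {P X q : EuclideanSpace ℝ (Fin 3)} (hq : q ∈ sSegment T P X) :
    sDist q X ≤ sDist P X := by
  have hPq : 0 ≤ sDist P q := arccos_nonneg _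
  linarith [hq.2]

lemma IsGeodesicSpace.exists_mem_inter_dist_add_dist_eq {Z : Type*} [MetricSpace Z]
    (hZ : IsGeodesicSpace Z) {A B : Set Z} (hA : IsClosed A) (hB : IsClosed B)
    (hcover : A ∪ B = Set.univ) {a b : Z} (ha : a ∈ A) (hb : b ∈ B) :
    ∃ z ∈ A ∩ B, dist a z + dist z b = dist a b := by
  set L := dist a b
  obtain ⟨γ, hγ0, hγL, hγ⟩ := hZ a b
  have h0 : (0 : ℝ) ∈ Set.Icc 0 L := Set.left_mem_Icc.2 dist_nonneg
  have hL : L ∈ Set.Icc 0 L := Set.right_mem_Icc.2 dist_nonneg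
  have hγcont : ContinuousOn γ (Set.Icc 0 L) :=
    (LipschitzOnWith.of_dist_le_mul fun s hs t ht => by
      rw [hγ s hs t ht, NNReal.coe_one, one_mul, Real.dist_eq]).continuousOn
  have hpath : IsPreconnected (γ '' Set.Icc 0 L) := isPreconnected_Icc.image γ hγcont
  obtain ⟨_, ⟨t, ht, rfl⟩, hγtA, hγtB⟩ := isPreconnected_closed_iff.1 hpath A B hA hB
    (fun z _ => hcover ▸ Set.mem_univ z) ⟨a, ⟨0, h0, hγ0⟩, ha⟩ ⟨b, ⟨L, hL, hγL⟩, hb⟩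
  refine ⟨γ t, ⟨hγtA, hγtB⟩, ?_⟩
  rw [← hγ0, ← hγL, hγ 0 h0 t ht, hγ t ht L hL, abs_sub_comm, sub_zero, abs_of_nonneg ht.1,
    abs_of_nonpos (sub_nonpos.2 ht.2)]
  ring

theorem stmt_8_general (ε : ℝ) (hε : ε ∈ Set.Ioo 0 (π / 2))
    (Z : Type*) [MetricSpace Z] (hZ : IsGeodesicSpace Z)
    (T : Set (EuclideanSpace ℝ (Fin 3))) (hT : ∀ v ∈ T, ‖v‖ = 1)
    (P X Y : EuclideanSpace ℝ (Fin 3)) (hX : X ∈ T) (hY : Y ∈ T)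
    (hpx : sDist P X = ε) (hxy : sDist X Y = π - ε)
    (ι ι' : EuclideanSpace ℝ (Fin 3) → Z)
    (hι : ∀ a ∈ T, ∀ b ∈ T, dist (ι a) (ι b) = sDist a b)
    (hι' : ∀ a ∈ T, ∀ b ∈ T, dist (ι' a) (ι' b) = sDist a b)
    (hagree : ∀ q ∈ sSegment T P X, ι q = ι' q)
    (hcover : ι '' T ∪ ι' '' T = Set.univ)
    (hclosed : IsClosed (ι '' T)) (hclosed' : IsClosed (ι' '' T))
    (hinter : ι '' T ∩ ι' '' T = ι '' sSegment T P X) :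
    π - 2 * ε < dist (ι Y) (ι' Y) := by
  obtain ⟨z, hz, hsplit⟩ := hZ.exists_mem_inter_dist_add_dist_eq hclosed hclosed' hcover
    (Set.mem_image_of_mem ι hY) (Set.mem_image_of_mem ι' hY)
  rw [hinter] at hz
  obtain ⟨q, hq, rfl⟩ := hz
  have hqT : q ∈ T := hq.1
  have hdist : dist (ι Y) (ι' Y) = 2 * sDist q Y := by
    rw [← hsplit, hι Y hY q hqT, hagree q hq, hι' q hqT Y hY, sDist_comm Y q, two_mul]
  have hXq : sDist X q ≤ ε := sDist_comm X q ▸ hpx ▸ sDist_le_of_mem_sSegment hq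
  have hqY : π - 2 * ε ≤ sDist q Y := by
    linarith [sDist_triangle (hT X hX) (hT q hqT) (hT Y hY)]
  linarith [hε.2]

/-- let `Z` be the disc obtained by gluing two isometric copies (via
`ι`, `ι'`) of the spherical triangle `T = PXY` — with `|PX| = ε ∈ (0,π/2)`, right angle
at `X`, `|XY| = π − ε` — along the common side `PX`. Then `dist_Z(ι Y, ι' Y) > π − 2ε`. -/
theorem stmt_8 (ε : ℝ) (hε : ε ∈ Set.Ioo 0 (π / 2))
    (Z : Type*) [MetricSpace Z] (hZ : IsGeodesicSpace Z)
    (T : Set (EuclideanSpace ℝ (Fin 3))) (hT : ∀ v ∈ T, ‖v‖ = 1)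
    (P X Y : EuclideanSpace ℝ (Fin 3)) (hP : P ∈ T) (hX : X ∈ T) (hY : Y ∈ T)
    (hpx : sDist P X = ε) (hangx : sAngle X P Y = π / 2) (hxy : sDist X Y = π - ε)
    (ι ι' : EuclideanSpace ℝ (Fin 3) → Z)
    (hι : ∀ a ∈ T, ∀ b ∈ T, dist (ι a) (ι b) = sDist a b)
    (hι' : ∀ a ∈ T, ∀ b ∈ T, dist (ι' a) (ι' b) = sDist a b)
    (hagree : ∀ q ∈ sSegment T P X, ι q = ι' q)
    (hcover : ι '' T ∪ ι' '' T = Set.univ)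
    (hclosed : IsClosed (ι '' T)) (hclosed' : IsClosed (ι' '' T))
    (hinter : ι '' T ∩ ι' '' T = ι '' sSegment T P X) :
    π - 2 * ε < dist (ι Y) (ι' Y) :=
  stmt_8_general ε hε Z hZ T hT P X Y hX hY hpx hxy ι ι' hι hι' hagree hcover hclosed hclosed'
    hinter
end
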